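/- arXiv:2106.14987 — 2 statements merged into one kernel-verified Lean document; each statement's English description precedes it below -/
import Mathlib

section
/- Let p be a prime and M = ℤ⟨x,x⁻¹,c⟩/(c², cx+xc) with d_h(c) = −p, d_h(x) = 0. Suppose there exist ℤ-linear maps f₁,₁ : M → (ℤ/p)[x,x⁻¹] (of appropriate bidegree, so f₁,₁(c) = a·x for some a ∈ ℤ/p and f₁,₁(xⁿ) = 0) satisfying f₁,₁(x₁x₂) + f₀,₁(m₁,₂(x₁,x₂)) = f₁,₁(x₁)f₀,₁(x₂) + f₀,₁(x₁)f₁,₁(x₂) for all x₁, x₂ ∈ {x, c}, where f₀,₁(xⁿ) = xⁿ, f₀,₁(cxⁿ) = 0, m₁,₂(x,c) = x², m₁,₂(c,x) = 0. Then 2a·x² = x² in (ℤ/p)[x,x⁻¹]; in particular, if p = 2 this is a contradiction, so no such f₁,₁ exists when p = 2. -/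
open LaurentPolynomial

/-- Integer powers `xⁿ` of an invertible element, written via `x` (for `n ≥ 0`) and a
chosen inverse `y` (for `n < 0`). -/
def zpow2 {A : Type} [Monoid A] (x y : A) (n : ℤ) : A :=
  if 0 ≤ n then x ^ n.toNat else y ^ (-n).toNat

/-!
Evaluate the ∞-morphism equation at `(x, c)` and at `(c, x)`. Since `f₀,₁(c) = 0` and
`f₁,₁(x) = 0`, the first gives `f₁,₁(xc) + x² = a x²` (the `x²` coming from `m₁,₂(x,c)`), and
the second gives `f₁,₁(cx) = a x²`. Anticommutativity `cx = -xc` turns the second into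
`-f₁,₁(xc) = a x²`, and adding the two yields `x² = 2a x²`, impossible when `2 = 0`.
-/

section zpow2

variable {A : Type} [Monoid A] (x y : A)

@[simp]
lemma zpow2_zero : zpow2 x y 0 = 1 := by simp [zpow2]

@[simp]
lemma zpow2_one : zpow2 x y 1 = x := by simp [zpow2]

lemma zpow2_two : zpow2 x y 2 = x * x := by simp [zpow2, pow_two]

end zpow2

namespace LaurentPolynomial

variable {R : Type*} [CommRing R]

lemma T_one_mul_T_one : (T 1 * T 1 : R[T;T⁻¹]) = T 2 := by
  rw [← T_add]; norm_num

lemma two_mul_smul_T_ne_T [Nontrivial R] (h2 : (2 : R) = 0) (a : R) (n : ℤ) :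
    (2 * a) • (T n : R[T;T⁻¹]) ≠ T n := by
  rw [h2, zero_mul, zero_smul]
  exact (isUnit_T n).ne_zero.symm

end LaurentPolynomial

lemma two_mul_smul_T_two_of_leibniz {R M : Type*} [CommRing R] [Ring M] {x c : M}
    (hanti : c * x + x * c = 0) {a : R} {f01 f11 : M →+ R[T;T⁻¹]}
    (hf01x : f01 x = T 1) (hf01c : f01 c = 0) (hf01xx : f01 (x * x) = T 2)
    (hf11x : f11 x = 0) (hf11c : f11 c = a • T 1)
    (h_xc : f11 (x * c) + f01 (x * x) = f11 x * f01 c + f01 x * f11 c)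
    (h_cx : f11 (c * x) = f11 c * f01 x + f01 c * f11 x) :
    (2 * a) • (T 2 : R[T;T⁻¹]) = T 2 := by
  rw [eq_neg_of_add_eq_zero_left hanti, map_neg] at h_cx
  simp only [hf01x, hf01c, hf01xx, hf11x, hf11c, mul_zero, zero_add, add_zero,
    mul_smul_comm, smul_mul_assoc, T_one_mul_T_one] at h_xc h_cx
  rw [two_mul, add_smul]
  linear_combination -h_xc - h_cx

theorem stmt_10_general (p : ℕ) (M : Type) [Ring M]
    (x y c : M)
    (hanti : c * x + x * c = 0)
    (a : ZMod p)
    (f01 f11 : M →+ LaurentPolynomial (ZMod p))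
    (hf01x : ∀ n : ℤ, f01 (zpow2 x y n) = T n)
    (hf01c : ∀ n : ℤ, f01 (c * zpow2 x y n) = 0)
    (hf11x : ∀ n : ℤ, f11 (zpow2 x y n) = 0)
    (hf11c : f11 c = a • T 1)
    (m12 : M → M → M)
    (hm_xc : m12 x c = x * x) (hm_cx : m12 c x = 0)
    (heq : ∀ u v : M, (u = x ∨ u = c) → (v = x ∨ v = c) →
      f11 (u * v) + f01 (m12 u v) = f11 u * f01 v + f01 u * f11 v) :
    ((2 : ZMod p) * a) • (T 2 : LaurentPolynomial (ZMod p)) = T 2 ∧ (p = 2 → False) := by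
  have hf01x1 : f01 x = T 1 := by simpa using hf01x 1
  have hf01c1 : f01 c = 0 := by simpa using hf01c 0
  have hf01xx : f01 (x * x) = T 2 := by simpa [zpow2_two] using hf01x 2
  have hf11x1 : f11 x = 0 := by simpa using hf11x 1
  have h_xc := heq x c (.inl rfl) (.inr rfl)
  have h_cx := heq c x (.inr rfl) (.inl rfl)
  rw [hm_xc] at h_xc
  rw [hm_cx, map_zero, add_zero] at h_cx
  have key := two_mul_smul_T_two_of_leibniz hanti hf01x1 hf01c1 hf01xx hf11x1 hf11c h_xc h_cx
  refine ⟨key, fun hp => ?_⟩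
  subst hp
  exact two_mul_smul_T_ne_T rfl a 2 key

/-- Let `p` be a prime and `M = ℤ⟨x^{±1}, c⟩/(c², cx + xc)` (encoded by its
relations and its `ℤ`-basis `{xⁿ, c·xⁿ}`).  Suppose `f₀,₁, f₁,₁ : M → (ℤ/p)[x^{±1}]` are
`ℤ`-linear maps with `f₀,₁(xⁿ) = xⁿ`, `f₀,₁(c·xⁿ) = 0`, `f₁,₁(xⁿ) = 0`, `f₁,₁(c) = a·x`
for some `a ∈ ℤ/p`, satisfying
`f₁,₁(x₁x₂) + f₀,₁(m₁,₂(x₁,x₂)) = f₁,₁(x₁)f₀,₁(x₂) + f₀,₁(x₁)f₁,₁(x₂)` for all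
`x₁, x₂ ∈ {x, c}`, where `m₁,₂(x,c) = x²`, `m₁,₂(c,x) = 0`, `m₁,₂(x,x) = 0`,
`m₁,₂(c,c) = 0`.  Then `2a·x² = x²` in `(ℤ/p)[x^{±1}]`; in particular for `p = 2` this
is a contradiction, so no such `f₁,₁` exists when `p = 2`. -/
theorem stmt_10 (p : ℕ) [Fact p.Prime] (M : Type) [Ring M]
    (x y c : M) (hxy : x * y = 1) (hyx : y * x = 1)
    (hc2 : c * c = 0) (hanti : c * x + x * c = 0)
    (b : Module.Basis (Bool × ℤ) ℤ M)
    (hb0 : ∀ n : ℤ, b (false, n) = zpow2 x y n)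
    (hb1 : ∀ n : ℤ, b (true, n) = c * zpow2 x y n)
    (a : ZMod p)
    (f01 f11 : M →+ LaurentPolynomial (ZMod p))
    (hf01x : ∀ n : ℤ, f01 (zpow2 x y n) = T n)
    (hf01c : ∀ n : ℤ, f01 (c * zpow2 x y n) = 0)
    (hf11x : ∀ n : ℤ, f11 (zpow2 x y n) = 0)
    (hf11c : f11 c = a • T 1)
    (m12 : M → M → M)
    (hm_xc : m12 x c = x * x) (hm_cx : m12 c x = 0)
    (hm_xx : m12 x x = 0) (hm_cc : m12 c c = 0)
    (heq : ∀ u v : M, (u = x ∨ u = c) → (v = x ∨ v = c) →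
      f11 (u * v) + f01 (m12 u v) = f11 u * f01 v + f01 u * f11 v) :
    ((2 : ZMod p) * a) • (T 2 : LaurentPolynomial (ZMod p)) = T 2 ∧ (p = 2 → False) :=
  stmt_10_general p M x y c hanti a f01 f11 hf01x hf01c hf11x hf11c m12 hm_xc hm_cx heq
end

section
/- Continuing the previous setting with p an odd prime: if additionally the equation f₁,₁(m₁,₂(x₁,x₂)) = f₁,₁(x₁)·f₁,₁(x₂) holds for all x₁, x₂ ∈ {x, c} (with m₁,₂(c,c) = 0 and f₁,₁(c) = (1/2)x forced by the (1,2)-equation), then 0 = (1/4)x² in (ℤ/p)[x,x⁻¹], a contradiction. Hence the Dugger–Shipley algebra is not formal for any prime p. -/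
open LaurentPolynomial

theorem LaurentPolynomial.smul_T_ne_zero {R : Type*} [Semiring R] {a : R} (ha : a ≠ 0) (n : ℤ) :
    a • (T n : R[T;T⁻¹]) ≠ 0 := by
  rw [T, AddMonoidAlgebra.smul_single', mul_one]
  exact AddMonoidAlgebra.single_ne_zero.mpr ha

theorem ZMod.two_ne_zero_of_ne_two {n : ℕ} [Fact (1 < n)] (hn : n ≠ 2) : (2 : ZMod n) ≠ 0 :=
  Ring.two_ne_zero (by rwa [ZMod.ringChar_zmod_n])

theorem stmt_11_general (p : ℕ) [Fact p.Prime] (hodd : p ≠ 2) (M : Type) [Ring M]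
    (x c : M)
    (f11 : M →+ LaurentPolynomial (ZMod p))
    (hf11c : f11 c = (2 : ZMod p)⁻¹ • T 1)
    (m12 : M → M → M)
    (hm_cc : m12 c c = 0)
    (heq22 : ∀ u v : M, (u = x ∨ u = c) → (v = x ∨ v = c) →
      f11 (m12 u v) = f11 u * f11 v) :
    False := by
  have hcc := heq22 c c (Or.inr rfl) (Or.inr rfl)
  rw [hm_cc, map_zero, hf11c] at hcc
  have hf11c_ne_zero : (2 : ZMod p)⁻¹ • (T 1 : (ZMod p)[T;T⁻¹]) ≠ 0 :=
    smul_T_ne_zero (inv_ne_zero (ZMod.two_ne_zero_of_ne_two hodd)) 1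
  exact mul_self_ne_zero.mpr hf11c_ne_zero hcc.symm

/-- Continuing the setting of Statement 10 with `p` an odd prime: if
additionally `f₁,₁(m₁,₂(x₁,x₂)) = f₁,₁(x₁)·f₁,₁(x₂)` holds for all `x₁, x₂ ∈ {x, c}`
(the derived `∞`-morphism equation for `(i,r) = (2,2)`), with `m₁,₂(c,c) = 0` and
`f₁,₁(c) = (1/2)·x` (forced by the `(1,2)`-equation), then `0 = (1/4)x²` in
`(ℤ/p)[x^{±1}]`, a contradiction.  Hence the Dugger–Shipley algebra is not formal for
any prime `p`. -/
theorem stmt_11 (p : ℕ) [Fact p.Prime] (hodd : p ≠ 2) (M : Type) [Ring M]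
    (x y c : M) (hxy : x * y = 1) (hyx : y * x = 1)
    (hc2 : c * c = 0) (hanti : c * x + x * c = 0)
    (b : Module.Basis (Bool × ℤ) ℤ M)
    (hb0 : ∀ n : ℤ, b (false, n) = zpow2 x y n)
    (hb1 : ∀ n : ℤ, b (true, n) = c * zpow2 x y n)
    (f01 f11 : M →+ LaurentPolynomial (ZMod p))
    (hf01x : ∀ n : ℤ, f01 (zpow2 x y n) = T n)
    (hf01c : ∀ n : ℤ, f01 (c * zpow2 x y n) = 0)
    (hf11x : ∀ n : ℤ, f11 (zpow2 x y n) = 0)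
    (hf11c : f11 c = (2 : ZMod p)⁻¹ • T 1)
    (m12 : M → M → M)
    (hm_xc : m12 x c = x * x) (hm_cx : m12 c x = 0)
    (hm_xx : m12 x x = 0) (hm_cc : m12 c c = 0)
    (heq12 : ∀ u v : M, (u = x ∨ u = c) → (v = x ∨ v = c) →
      f11 (u * v) + f01 (m12 u v) = f11 u * f01 v + f01 u * f11 v)
    (heq22 : ∀ u v : M, (u = x ∨ u = c) → (v = x ∨ v = c) →
      f11 (m12 u v) = f11 u * f11 v) :
    False :=
  stmt_11_general p hodd M x c f11 hf11c m12 hm_cc heq22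
end
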